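/- Let λ, μ ∈ ℝ and let E = {F ∈ C^∞(ℝ^{1|2}) : ∂_2(F) = 0}, so that C^∞(ℝ^{1|2}) = E ⊕ θ_2E. For i, j ∈ {1, 2} let D_{ij} ⊂ D²_{λ,μ} be the subspace of differential operators that map the i-th summand (E for i = 1, θ_2E for i = 2) into the j-th summand and annihilate the other summand. Then D²_{λ,μ} = D_{11} ⊕ D_{22} ⊕ D_{12} ⊕ D_{21}, and each subspace D_{ij} is invariant under the osp(1|2)-action X_H·A = L^μ_{X_H}∘A − (−1)^{|H||A|} A∘L^λ_{X_H}, X_H ∈ osp(1|2). (This realizes the osp(1|2)-module decomposition D²_{λ,μ} ≅ D¹_{λ,μ} ⊕ D¹_{λ+1/2,μ+1/2} ⊕ Π(D¹_{λ,μ+1/2} ⊕ D¹_{λ+1/2,μ}).) -/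

import Mathlib

noncomputable section
open Function
open scoped ContDiff

def SmoothFn : Subalgebra ℝ (ℝ → ℝ) where
  carrier := {f | ContDiff ℝ ∞ f}
  mul_mem' := fun {a b} (hf : ContDiff ℝ ∞ a) (hg : ContDiff ℝ ∞ b) => hf.mul hg
  add_mem' := fun {a b} (hf : ContDiff ℝ ∞ a) (hg : ContDiff ℝ ∞ b) => hf.add hg
  algebraMap_mem' := fun c => (contDiff_const : ContDiff ℝ ∞ (fun _ : ℝ => c))

abbrev SF : Type := SmoothFn

theorem mem_SmoothFn {f : ℝ → ℝ} : f ∈ SmoothFn ↔ ContDiff ℝ ∞ f := ⟨fun h => h, fun h => h⟩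

def sderiv (f : SF) : SF :=
  ⟨deriv (f : ℝ → ℝ), mem_SmoothFn.mpr (contDiff_infty_iff_deriv.mp (mem_SmoothFn.mp f.2)).2⟩

def cx : SF := ⟨id, mem_SmoothFn.mpr contDiff_id⟩

/-- `C^∞(ℝ^{1|2})`: a superfunction `f₀ + f₁θ₁ + f₂θ₂ + f₁₂θ₁θ₂` is recorded by its four
smooth coefficients, indexed by `0 ↦ f₀`, `1 ↦ f₁`, `2 ↦ f₂`, `3 ↦ f₁₂`. -/
def S2 : Type := Fin 4 → SF

instance : AddCommGroup S2 := inferInstanceAs (AddCommGroup (Fin 4 → SF))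
instance : Module ℝ S2 := inferInstanceAs (Module ℝ (Fin 4 → SF))

namespace S2

@[simp] theorem add_apply (F G : S2) (i : Fin 4) : (F + G) i = F i + G i := rfl
@[simp] theorem sub_apply (F G : S2) (i : Fin 4) : (F - G) i = F i - G i := rfl
@[simp] theorem smul_apply (c : ℝ) (F : S2) (i : Fin 4) : (c • F) i = c • F i := rfl
@[simp] theorem zero_apply (i : Fin 4) : (0 : S2) i = 0 := rfl

/-- Supercommutative multiplication on `C^∞(ℝ^{1|2})`. -/
def mul (F G : S2) : S2 :=
  ![F 0 * G 0,
    F 0 * G 1 + F 1 * G 0,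
    F 0 * G 2 + F 2 * G 0,
    F 0 * G 3 + F 3 * G 0 + F 1 * G 2 - F 2 * G 1]

/-- The odd coordinate `θ₁`. -/
def θ1 : S2 := ![0, 1, 0, 0]
/-- The odd coordinate `θ₂`. -/
def θ2 : S2 := ![0, 0, 1, 0]
/-- The constant superfunction `1`. -/
def one2 : S2 := ![1, 0, 0, 0]
/-- The superfunction `x`. -/
def fx : S2 := ![cx, 0, 0, 0]
/-- The superfunction `x²`. -/
def fx2 : S2 := ![cx * cx, 0, 0, 0]
/-- The superfunction `xθ₁`. -/
def fxθ1 : S2 := ![0, cx, 0, 0]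
/-- The superfunction `xθ₂`. -/
def fxθ2 : S2 := ![0, 0, cx, 0]
/-- The superfunction `θ₁θ₂`. -/
def fθ12 : S2 := ![0, 0, 0, 1]

/-- The even derivative `∂ₓ`. -/
def dx (F : S2) : S2 := fun i => sderiv (F i)
/-- The odd (left) partial derivative `∂₁ = ∂/∂θ₁`. -/
def d1 (F : S2) : S2 := ![F 1, 0, F 3, 0]
/-- The odd (left) partial derivative `∂₂ = ∂/∂θ₂`. -/
def d2 (F : S2) : S2 := ![F 2, -F 3, 0, 0]
/-- The odd vector field `η̄₁ = ∂₁ − θ₁∂ₓ`. -/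
def eta1 (F : S2) : S2 := d1 F - mul θ1 (dx F)
/-- The odd vector field `η̄₂ = ∂₂ − θ₂∂ₓ`. -/
def eta2 (F : S2) : S2 := d2 F - mul θ2 (dx F)

/-- The even part `f₀ + f₁₂θ₁θ₂` of a superfunction. -/
def evenPart (F : S2) : S2 := ![F 0, 0, 0, F 3]
/-- The odd part `f₁θ₁ + f₂θ₂` of a superfunction. -/
def oddPart (F : S2) : S2 := ![0, F 1, F 2, 0]

/-- `F` is even (parity `0̄`). -/
def IsEven (F : S2) : Prop := F 1 = 0 ∧ F 2 = 0
/-- `F` is odd (parity `1̄`). -/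
def IsOdd (F : S2) : Prop := F 0 = 0 ∧ F 3 = 0
/-- `F` is homogeneous of parity `p` (`false` = even, `true` = odd). -/
def HasParity (F : S2) (p : Bool) : Prop := if p then IsOdd F else IsEven F

/-- The sign `(−1)^p`. -/
def sgn (p : Bool) : ℝ := if p then -1 else 1

/-- The contact vector field `X_F` applied to `G`; for homogeneous `F` this is
`F∂ₓ(G) − ½(−1)^{|F|}(η̄₁(F)η̄₁(G) + η̄₂(F)η̄₂(G))`, extended linearly in `F`. -/
def X (F G : S2) : S2 :=
  mul F (dx G)
    - (1 / 2 : ℝ) • (mul (eta1 (evenPart F)) (eta1 G) + mul (eta2 (evenPart F)) (eta2 G))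
    + (1 / 2 : ℝ) • (mul (eta1 (oddPart F)) (eta1 G) + mul (eta2 (oddPart F)) (eta2 G))

/-- The contact bracket `{F,G} = FG' − F'G − ½(−1)^{|F|}(η̄₁(F)η̄₁(G) + η̄₂(F)η̄₂(G))`
(for homogeneous `F`, extended linearly), so `[X_F, X_G] = X_{{F,G}}`. -/
def cbr (F G : S2) : S2 := X F G - mul (dx F) G

/-- The action `L^λ_{X_H}(G) = X_H(G) + λ H' G` of `X_H` on `λ`-densities `F²_λ`. -/
def Lact (lam : ℝ) (H G : S2) : S2 := X H G + lam • mul (dx H) G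

/-- `osp(2|2)`, realized as the span of the contact Hamiltonians
`1, x, x², xθ₁, xθ₂, θ₁, θ₂, θ₁θ₂` (identifying `X_F ↔ F`). -/
def osp22 : Submodule ℝ S2 :=
  Submodule.span ℝ {one2, fx, fx2, fxθ1, fxθ2, θ1, θ2, fθ12}

/-- `osp(1|2) ⊂ osp(2|2)`: the span of `1, x, x², xθ₁, θ₁`. -/
def osp12 : Submodule ℝ S2 :=
  Submodule.span ℝ {one2, fx, fx2, fxθ1, θ1}

/-- A linear differential operator `F²_λ → F²_μ`:
`A(F) = Σ_{ℓ,m} a_{ℓ,m} η̄₁^ℓ η̄₂^m (F)` with smooth coefficients. -/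
def IsDiffOp (A : S2 → S2) : Prop :=
  ∃ (N : ℕ) (a : Fin (N + 1) → Fin (N + 1) → S2),
    ∀ F, A F = ∑ l : Fin (N + 1), ∑ m : Fin (N + 1),
      mul (a l m) (eta1^[(l : ℕ)] (eta2^[(m : ℕ)] F))

/-- The action of `X_H` (`H` homogeneous of parity `pH`) on a homogeneous operator `A`
of parity `pA`: `X_H·A = L^μ_{X_H} ∘ A − (−1)^{|H||A|} A ∘ L^λ_{X_H}`. -/
def opAct (lam mu : ℝ) (pH pA : Bool) (H : S2) (A : S2 → S2) : S2 → S2 :=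
  fun F => Lact mu H (A F) - sgn (pH && pA) • A (Lact lam H F)

/-- An operator is homogeneous of parity `p` if it shifts the parity of homogeneous
superfunctions by `p`. -/
def OpParity (A : S2 → S2) (p : Bool) : Prop :=
  ∀ (F : S2) (q : Bool), HasParity F q → HasParity (A F) (xor p q)


/-- A `1`-cochain of `osp(2|2)` with values in `D²_{λ,μ}`, recorded as a map defined on all
contact Hamiltonians; it represents a cochain through its restriction to `osp22`,
`Υ(X_G) = U G`. -/
abbrev Cochain := S2 → (S2 → S2)

/-- A cochain takes values in differential operators (on `osp(2|2)`). -/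
def DiffValued (U : Cochain) : Prop := ∀ F ∈ osp22, IsDiffOp (U F)

/-- The `1`-cocycle condition for a homogeneous cochain `U` of parity `pU`:
`Υ([X_F,X_G]) = (−1)^{|F||Υ|} X_F·Υ(X_G) − (−1)^{|G|(|F|+|Υ|)} X_G·Υ(X_F)`
for all homogeneous `X_F, X_G ∈ osp(2|2)`. -/
def IsCocycle (lam mu : ℝ) (pU : Bool) (U : Cochain) : Prop :=
  ∀ F G : S2, F ∈ osp22 → G ∈ osp22 →
    ∀ pF pG : Bool, HasParity F pF → HasParity G pG →
      U (cbr F G) =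
        sgn (pF && pU) • opAct lam mu pF (xor pU pG) F (U G)
          - sgn (pG && xor pF pU) • opAct lam mu pG (xor pU pF) G (U F)

/-- `U` is a coboundary of parity `pU`: there is `A ∈ D²_{λ,μ}` of parity `pU` with
`Υ(X_F) = (−1)^{|F||A|} X_F·A` for all `X_F ∈ osp(2|2)`. -/
def IsCoboundary (lam mu : ℝ) (pU : Bool) (U : Cochain) : Prop :=
  ∃ A : S2 → S2, IsDiffOp A ∧ OpParity A pU ∧
    ∀ F ∈ osp22, ∀ pF : Bool, HasParity F pF →
      U F = sgn (pF && pU) • opAct lam mu pF pU F A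

/-- `U` is a coboundary (of some homogeneous `A ∈ D²_{λ,μ}`). -/
def IsCoboundaryAny (lam mu : ℝ) (U : Cochain) : Prop :=
  ∃ pU : Bool, IsCoboundary lam mu pU U

/-- An `osp(1|2)`-relative `1`-cocycle: a `1`-cocycle vanishing on `osp(1|2)`. -/
def IsRelCocycle (lam mu : ℝ) (pU : Bool) (U : Cochain) : Prop :=
  IsCocycle lam mu pU U ∧ ∀ F ∈ osp12, U F = 0

/-- `A ∈ D²_{λ,μ}` (of parity `pA`) is `osp(1|2)`-invariant: `X_H·A = 0` for all
`X_H ∈ osp(1|2)`. -/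
def IsInvariantOp (lam mu : ℝ) (pA : Bool) (A : S2 → S2) : Prop :=
  ∀ H ∈ osp12, ∀ pH : Bool, HasParity H pH → opAct lam mu pH pA H A = 0

/-- `U` is an `osp(1|2)`-relative coboundary of parity `pU`: `Υ = δA` with `A` an
`osp(1|2)`-invariant homogeneous element of `D²_{λ,μ}`. -/
def IsRelCoboundary (lam mu : ℝ) (pU : Bool) (U : Cochain) : Prop :=
  ∃ A : S2 → S2, IsDiffOp A ∧ OpParity A pU ∧ IsInvariantOp lam mu pU A ∧
    ∀ F ∈ osp22, ∀ pF : Bool, HasParity F pF →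
      U F = sgn (pF && pU) • opAct lam mu pF pU F A

/-- `U` is a relative coboundary (of some homogeneous invariant `A`). -/
def IsRelCoboundaryAny (lam mu : ℝ) (U : Cochain) : Prop :=
  ∃ pU : Bool, IsRelCoboundary lam mu pU U

/-! ### The explicit nontrivial cocycles -/

/-- `Υ_{λ,λ}(X_G) : F ↦ G′·F`. -/
def U1 : Cochain := fun G F => mul (dx G) F

/-- `Υ̃_{0,0}(X_G) : F ↦ η̄₁η̄₂(G)·F`. -/
def Ut0 : Cochain := fun G F => mul (eta1 (eta2 G)) F

/-- `Υ̃_{λ,λ}(X_G) : F ↦ 2λ η̄₁(∂₂G)·F − (−1)^{|G|}(∂₂(G)·η̄₁(F) + θ₂·η̄₂η̄₁(G)·η̄₂(F))`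
(for `λ ≠ 0`), the sign `(−1)^{|G|}` being realized by the even/odd splitting of `G`. -/
def Ut (lam : ℝ) : Cochain := fun G F =>
  (2 * lam) • mul (eta1 (d2 G)) F
    - (mul (d2 (evenPart G)) (eta1 F) + mul (mul θ2 (eta2 (eta1 (evenPart G)))) (eta2 F))
    + (mul (d2 (oddPart G)) (eta1 F) + mul (mul θ2 (eta2 (eta1 (oddPart G)))) (eta2 F))

/-- `Υ̃_{λ,λ}` for general `λ` (with the special value at `λ = 0`). -/
def Ut' (lam : ℝ) : Cochain := if lam = 0 then Ut0 else Ut lam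

/-- `Υ_{−k/2,k/2}(X_G) : F ↦ G′·η̄₁η̄₂^{2k−1}(F)`. -/
def Uk (k : ℕ) : Cochain := fun G F => mul (dx G) (eta1 (eta2^[2 * k - 1] F))

/-- `Υ̃_{−k/2,k/2}(X_G) :
F ↦ k η̄₁(∂₂G)·η̄₁η̄₂^{2k−1}(F) − (−1)^{|G|}(∂₂(G)·η̄₂^{2k+1}(F) − η̄₁(θ₂∂₂(G))·η̄₁^{2k+1}(F))`. -/
def Utk (k : ℕ) : Cochain := fun G F =>
  (k : ℝ) • mul (eta1 (d2 G)) (eta1 (eta2^[2 * k - 1] F))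
    - (mul (d2 (evenPart G)) (eta2^[2 * k + 1] F)
        - mul (eta1 (mul θ2 (d2 (evenPart G)))) (eta1^[2 * k + 1] F))
    + (mul (d2 (oddPart G)) (eta2^[2 * k + 1] F)
        - mul (eta1 (mul θ2 (d2 (oddPart G)))) (eta1^[2 * k + 1] F))

/-- `Ῡ_{−k/2,k/2}(X_G) :
F ↦ (k−1) G″·η̄₁η̄₂^{2k−3}(F) + (−1)^{|G|}(η̄₂(G′)·η̄₁^{2k−1}(F) − η̄₁(G′)·η̄₂^{2k−1}(F))`. -/
def Ub (k : ℕ) : Cochain := fun G F =>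
  ((k : ℝ) - 1) • mul (dx (dx G)) (eta1 (eta2^[2 * k - 3] F))
    + (mul (eta2 (dx (evenPart G))) (eta1^[2 * k - 1] F)
        - mul (eta1 (dx (evenPart G))) (eta2^[2 * k - 1] F))
    - (mul (eta2 (dx (oddPart G))) (eta1^[2 * k - 1] F)
        - mul (eta1 (dx (oddPart G))) (eta2^[2 * k - 1] F))

/-! ### The action on possibly inhomogeneous operators -/

/-- The even part of an operator. -/
def opEven (A : S2 → S2) : S2 → S2 :=
  fun F => evenPart (A (evenPart F)) + oddPart (A (oddPart F))

/-- The odd part of an operator. -/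
def opOdd (A : S2 → S2) : S2 → S2 :=
  fun F => oddPart (A (evenPart F)) + evenPart (A (oddPart F))

/-- The action `X_H·A` of a homogeneous `X_H` on a possibly inhomogeneous operator `A`,
extending `opAct` by linearity in `A` via its parity decomposition. -/
def opActG (lam mu : ℝ) (pH : Bool) (H : S2) (A : S2 → S2) : S2 → S2 :=
  fun F => Lact mu H (A F)
    - (opEven A (Lact lam H F) + sgn pH • opOdd A (Lact lam H F))

/-- The coboundary `δA` of a homogeneous operator `A` of parity `pA`, as a cochain:
`δA(X_F) = (−1)^{|F||A|} X_F·A`, extended linearly in `F`. -/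
def cobdMap (lam mu : ℝ) (pA : Bool) (A : S2 → S2) : Cochain := fun F =>
  opAct lam mu false pA (evenPart F) A
    + sgn pA • opAct lam mu true pA (oddPart F) A

/-- A differential operator with constant coefficients. -/
def IsConstCoeffOp (A : S2 → S2) : Prop :=
  ∃ (N : ℕ) (a : Fin (N + 1) → Fin (N + 1) → Fin 4 → ℝ),
    ∀ F, A F = ∑ l : Fin (N + 1), ∑ m : Fin (N + 1),
      mul (fun i => algebraMap ℝ SF (a l m i)) (eta1^[(l : ℕ)] (eta2^[(m : ℕ)] F))

theorem ext4 {a b : S2} (h0 : a 0 = b 0) (h1 : a 1 = b 1) (h2 : a 2 = b 2)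
    (h3 : a 3 = b 3) : a = b := by
  funext i; fin_cases i; exacts [h0, h1, h2, h3]

@[simp] theorem mul_apply0 (a b : S2) : mul a b 0 = a 0 * b 0 := rfl
@[simp] theorem mul_apply1 (a b : S2) : mul a b 1 = a 0 * b 1 + a 1 * b 0 := rfl
@[simp] theorem mul_apply2 (a b : S2) : mul a b 2 = a 0 * b 2 + a 2 * b 0 := rfl
@[simp] theorem mul_apply3 (a b : S2) : mul a b 3 = a 0 * b 3 + a 3 * b 0 + a 1 * b 2 - a 2 * b 1 := rfl
@[simp] theorem d2_apply0 (a : S2) : d2 a 0 = a 2 := rfl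
@[simp] theorem d2_apply1 (a : S2) : d2 a 1 = -a 3 := rfl
@[simp] theorem d2_apply2 (a : S2) : d2 a 2 = 0 := rfl
@[simp] theorem d2_apply3 (a : S2) : d2 a 3 = 0 := rfl

theorem d2_add (a b : S2) : d2 (a + b) = d2 a + d2 b := by
  apply ext4 <;> simp <;> abel

theorem d2_smul (c : ℝ) (a : S2) : d2 (c • a) = c • d2 a := by
  apply ext4 <;> simp

theorem d2_zero : d2 (0 : S2) = 0 := by
  apply ext4 <;> simp

theorem mul_zero_right (a : S2) : mul a 0 = 0 := by
  apply ext4 <;> (simp only [mul_apply0, mul_apply1, mul_apply2, mul_apply3, zero_apply]; ring)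

theorem mul_add_right (a b c : S2) : mul a (b + c) = mul a b + mul a c := by
  apply ext4 <;>
    (simp only [mul_apply0, mul_apply1, mul_apply2, mul_apply3, add_apply]; ring)

theorem mul_smul_right (r : ℝ) (a b : S2) : mul a (r • b) = r • mul a b := by
  apply ext4 <;>
    simp [mul_smul_comm, smul_add, smul_sub]


/-- `E = {F ∈ C^∞(ℝ^{1|2}) : ∂₂F = 0}`, the first summand of `C^∞(ℝ^{1|2}) = E ⊕ θ₂E`. -/
def Esub : Submodule ℝ S2 where
  carrier := {F | d2 F = 0}
  add_mem' := by
    intro a b ha hb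
    simp only [Set.mem_setOf_eq] at *
    rw [d2_add, ha, hb, add_zero]
  zero_mem' := by simp only [Set.mem_setOf_eq]; exact d2_zero
  smul_mem' := by
    intro c a ha
    simp only [Set.mem_setOf_eq] at *
    rw [d2_smul, ha, smul_zero]

/-- `θ₂E`, the second summand of `C^∞(ℝ^{1|2}) = E ⊕ θ₂E`. -/
def θ2Esub : Submodule ℝ S2 where
  carrier := {F | ∃ G ∈ Esub, F = mul θ2 G}
  add_mem' := by
    rintro a b ⟨Ga, hGa, rfl⟩ ⟨Gb, hGb, rfl⟩
    exact ⟨Ga + Gb, Esub.add_mem hGa hGb, (mul_add_right _ _ _).symm⟩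
  zero_mem' := ⟨0, Esub.zero_mem, (mul_zero_right _).symm⟩
  smul_mem' := by
    rintro c a ⟨Ga, hGa, rfl⟩
    exact ⟨c • Ga, Esub.smul_mem c hGa, (mul_smul_right _ _ _).symm⟩

/-- `A ∈ D_{ij}`: the differential operators mapping the `i`-th summand of
`C^∞(ℝ^{1|2}) = E ⊕ θ₂E` into the `j`-th summand and annihilating the other summand
(indices: `0 ↦ E`, `1 ↦ θ₂E`). -/
def InD (i j : Fin 2) (A : S2 → S2) : Prop :=
  IsDiffOp A ∧
    (∀ F ∈ (if i = 0 then Esub else θ2Esub), A F ∈ (if j = 0 then Esub else θ2Esub)) ∧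
    (∀ F ∈ (if i = 0 then θ2Esub else Esub), A F = 0)

end S2

/-!
`C^∞(ℝ^{1|2}) = E ⊕ θ₂E`, and the projections onto the summands, `π₀ = 1 − θ₂η̄₂` and
`π₁ = θ₂η̄₂`, are themselves differential operators. Since differential operators are closed under composition
(commute `η̄ᵢ` past coefficients by the Leibniz rule, and use `η̄₂η̄₁ = −η̄₁η̄₂`), the four blocks
`π_j ∘ A ∘ π_i` of a differential operator `A` lie in `D_{ij}`, and `D_{ij}` is exactly the set of
differential operators equal to their own `(i, j)` block; this gives existence and uniqueness.
Every Hamiltonian of `osp(1|2)` lies in `E`, and for such `H` the action `L_{X_H}` commutes with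
both projections, as do the parity projections, so the action of `X_H` commutes with taking blocks.
-/

theorem SF.differentiable (f : SF) : Differentiable ℝ (f : ℝ → ℝ) :=
  (mem_SmoothFn.mp f.2).differentiable (by simp)

theorem sderiv_add (f g : SF) : sderiv (f + g) = sderiv f + sderiv g := by
  ext x
  exact deriv_add (SF.differentiable f x) (SF.differentiable g x)

theorem sderiv_smul (c : ℝ) (f : SF) : sderiv (c • f) = c • sderiv f := by
  ext x
  exact deriv_const_smul c (SF.differentiable f x)

theorem sderiv_zero : sderiv 0 = 0 := by
  simpa using sderiv_smul 0 0

theorem sderiv_neg (f : SF) : sderiv (-f) = -sderiv f := by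
  simpa using sderiv_smul (-1) f

theorem sderiv_mul (f g : SF) : sderiv (f * g) = sderiv f * g + f * sderiv g := by
  ext x
  exact deriv_mul (SF.differentiable f x) (SF.differentiable g x)

namespace S2

@[simp] theorem neg_apply (F : S2) (i : Fin 4) : (-F) i = -F i := rfl
@[simp] theorem dx_apply (F : S2) (i : Fin 4) : dx F i = sderiv (F i) := rfl

@[simp] theorem evenPart_apply0 (F : S2) : evenPart F 0 = F 0 := rfl
@[simp] theorem evenPart_apply1 (F : S2) : evenPart F 1 = 0 := rfl
@[simp] theorem evenPart_apply2 (F : S2) : evenPart F 2 = 0 := rfl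
@[simp] theorem evenPart_apply3 (F : S2) : evenPart F 3 = F 3 := rfl
@[simp] theorem oddPart_apply0 (F : S2) : oddPart F 0 = 0 := rfl
@[simp] theorem oddPart_apply1 (F : S2) : oddPart F 1 = F 1 := rfl
@[simp] theorem oddPart_apply2 (F : S2) : oddPart F 2 = F 2 := rfl
@[simp] theorem oddPart_apply3 (F : S2) : oddPart F 3 = 0 := rfl

@[simp] theorem eta1_apply0 (F : S2) : eta1 F 0 = F 1 := by
  rw [eta1, sub_apply]; simp [d1, θ1, mul]
@[simp] theorem eta1_apply1 (F : S2) : eta1 F 1 = -sderiv (F 0) := by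
  rw [eta1, sub_apply]; simp [d1, θ1, mul]
@[simp] theorem eta1_apply2 (F : S2) : eta1 F 2 = F 3 := by
  rw [eta1, sub_apply]; simp [d1, θ1, mul]
@[simp] theorem eta1_apply3 (F : S2) : eta1 F 3 = -sderiv (F 2) := by
  rw [eta1, sub_apply]; simp [d1, θ1, mul]
@[simp] theorem eta2_apply0 (F : S2) : eta2 F 0 = F 2 := by
  rw [eta2, sub_apply]; simp [θ2, mul]
@[simp] theorem eta2_apply1 (F : S2) : eta2 F 1 = -F 3 := by
  rw [eta2, sub_apply]; simp [θ2, mul]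
@[simp] theorem eta2_apply2 (F : S2) : eta2 F 2 = -sderiv (F 0) := by
  rw [eta2, sub_apply]; simp [θ2, mul]
@[simp] theorem eta2_apply3 (F : S2) : eta2 F 3 = sderiv (F 1) := by
  rw [eta2, sub_apply]; simp [θ2, mul]

theorem mul_assoc (a b c : S2) : mul (mul a b) c = mul a (mul b c) := by
  apply ext4 <;> (simp only [mul_apply0, mul_apply1, mul_apply2, mul_apply3]; ring)

theorem mul_zero_left (F : S2) : mul 0 F = 0 := by
  apply ext4 <;> simp

theorem mul_add_left (a b c : S2) : mul (a + b) c = mul a c + mul b c := by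
  apply ext4 <;> (simp only [mul_apply0, mul_apply1, mul_apply2, mul_apply3, add_apply]; ring)

theorem mul_smul_left (r : ℝ) (a b : S2) : mul (r • a) b = r • mul a b := by
  apply ext4 <;> simp [smul_add, smul_sub]

theorem eta1_add (F G : S2) : eta1 (F + G) = eta1 F + eta1 G := by
  apply ext4 <;> simp [sderiv_add] <;> abel

theorem eta2_add (F G : S2) : eta2 (F + G) = eta2 F + eta2 G := by
  apply ext4 <;> simp [sderiv_add] <;> abel

theorem eta1_smul (r : ℝ) (F : S2) : eta1 (r • F) = r • eta1 F := by
  apply ext4 <;> simp [sderiv_smul]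

theorem eta2_smul (r : ℝ) (F : S2) : eta2 (r • F) = r • eta2 F := by
  apply ext4 <;> simp [sderiv_smul]

theorem eta2_eta1 (F : S2) : eta2 (eta1 F) = -eta1 (eta2 F) := by
  apply ext4 <;> simp

theorem eta1_mul (a b : S2) :
    eta1 (mul a b) = mul (eta1 a) b + mul (evenPart a - oddPart a) (eta1 b) := by
  apply ext4 <;> (simp [sderiv_mul, sderiv_add]; ring)

theorem eta2_mul (a b : S2) :
    eta2 (mul a b) = mul (eta2 a) b + mul (evenPart a - oddPart a) (eta2 b) := by
  apply ext4 <;> (simp [sderiv_mul, sderiv_add]; ring)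

def mulL (a : S2) : S2 →ₗ[ℝ] S2 where
  toFun := mul a
  map_add' := mul_add_right a
  map_smul' r := mul_smul_right r a

def eta1L : S2 →ₗ[ℝ] S2 where
  toFun := eta1
  map_add' := eta1_add
  map_smul' := eta1_smul

def eta2L : S2 →ₗ[ℝ] S2 where
  toFun := eta2
  map_add' := eta2_add
  map_smul' := eta2_smul

theorem eta2_eta1_iterate (n : ℕ) (F : S2) :
    eta2 (eta1^[n] F) = ((-1 : ℝ) ^ n) • eta1^[n] (eta2 F) := by
  induction n with
  | zero => simp
  | succ n ih =>
    rw [Function.iterate_succ_apply', eta2_eta1, ih, eta1_smul, Function.iterate_succ_apply',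
      pow_succ, mul_neg_one, neg_smul]

@[simp] theorem coe_eta1L : ⇑eta1L = eta1 := rfl
@[simp] theorem coe_eta2L : ⇑eta2L = eta2 := rfl

def monomialOp (a : S2) (p : ℕ × ℕ) (F : S2) : S2 := mul a (eta1^[p.1] (eta2^[p.2] F))

def diffOps : Submodule ℝ (S2 → S2) :=
  Submodule.span ℝ (Set.range fun q : S2 × ℕ × ℕ => monomialOp q.1 q.2)

theorem monomialOp_mem_diffOps (a : S2) (p : ℕ × ℕ) : monomialOp a p ∈ diffOps :=
  Submodule.subset_span ⟨(a, p), rfl⟩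

theorem monomialOp_zero (p : ℕ × ℕ) : monomialOp 0 p = 0 :=
  funext fun _ => mul_zero_left _

theorem monomialOp_add (a b : S2) (p : ℕ × ℕ) :
    monomialOp (a + b) p = monomialOp a p + monomialOp b p :=
  funext fun _ => mul_add_left _ _ _

theorem monomialOp_smul (r : ℝ) (a : S2) (p : ℕ × ℕ) :
    monomialOp (r • a) p = r • monomialOp a p :=
  funext fun _ => mul_smul_left _ _ _

theorem isDiffOp_finsupp_sum (c : ℕ × ℕ →₀ S2) :
    IsDiffOp (c.sum fun p a => monomialOp a p) := by
  set N := c.support.sup fun p => max p.1 p.2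
  have hsub : c.support ⊆ Finset.range (N + 1) ×ˢ Finset.range (N + 1) := fun p hp => by
    have := Finset.le_sup (f := fun p : ℕ × ℕ => max p.1 p.2) hp
    simp only [Finset.mem_product, Finset.mem_range]
    omega
  refine ⟨N, fun l m => c (l, m), fun F => ?_⟩
  rw [Finsupp.sum_of_support_subset c hsub _ fun p _ => monomialOp_zero p, Finset.sum_apply,
    Finset.sum_product, ← Fin.sum_univ_eq_sum_range]
  refine Finset.sum_congr rfl fun l _ => ?_
  rw [← Fin.sum_univ_eq_sum_range (fun m => monomialOp (c (l, m)) (l, m) F)]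
  rfl

theorem isDiffOp_iff_mem_diffOps {A : S2 → S2} : IsDiffOp A ↔ A ∈ diffOps := by
  constructor
  · rintro ⟨N, a, hA⟩
    have hsum : A = ∑ l : Fin (N + 1), ∑ m : Fin (N + 1), monomialOp (a l m) (l, m) :=
      funext fun F => by simp only [hA, Finset.sum_apply, monomialOp]
    rw [hsum]
    exact Submodule.sum_mem _ fun l _ => Submodule.sum_mem _ fun m _ => monomialOp_mem_diffOps _ _
  · intro hA
    suffices ∃ c : ℕ × ℕ →₀ S2, A = c.sum fun p a => monomialOp a p by
      obtain ⟨c, rfl⟩ := this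
      exact isDiffOp_finsupp_sum c
    induction hA using Submodule.span_induction with
    | mem _ h =>
      obtain ⟨⟨a, p⟩, rfl⟩ := h
      exact ⟨Finsupp.single p a, by rw [Finsupp.sum_single_index (monomialOp_zero p)]⟩
    | zero => exact ⟨0, Finsupp.sum_zero_index.symm⟩
    | add A B _ _ hA hB =>
      obtain ⟨c, rfl⟩ := hA
      obtain ⟨d, rfl⟩ := hB
      exact ⟨c + d, (Finsupp.sum_add_index' monomialOp_zero fun p a b => monomialOp_add a b p).symm⟩
    | smul r A _ hA =>
      obtain ⟨c, rfl⟩ := hA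
      refine ⟨r • c, ?_⟩
      rw [Finsupp.sum_smul_index' monomialOp_zero, Finsupp.smul_sum]
      simp only [monomialOp_smul]

theorem map_add_of_mem_diffOps {A : S2 → S2} (hA : A ∈ diffOps) (F G : S2) :
    A (F + G) = A F + A G := by
  induction hA using Submodule.span_induction with
  | mem _ h =>
    obtain ⟨⟨a, l, m⟩, rfl⟩ := h
    have h1 := iterate_map_add eta1L l
    have h2 := iterate_map_add eta2L m
    simp only [coe_eta1L, coe_eta2L] at h1 h2
    simp only [monomialOp, h2, h1, mul_add_right]
  | zero => simp
  | add A B _ _ hA hB => simp only [Pi.add_apply, hA, hB]; abel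
  | smul r A _ hA => simp only [Pi.smul_apply, hA, smul_add]

theorem map_zero_of_mem_diffOps {A : S2 → S2} (hA : A ∈ diffOps) : A 0 = 0 := by
  simpa using map_add_of_mem_diffOps hA 0 0

theorem linearMap_comp_mem_diffOps (T : S2 →ₗ[ℝ] S2)
    (hT : ∀ a p, T ∘ monomialOp a p ∈ diffOps) {A : S2 → S2} (hA : A ∈ diffOps) :
    T ∘ A ∈ diffOps := by
  induction hA using Submodule.span_induction with
  | mem _ h =>
    obtain ⟨⟨a, p⟩, rfl⟩ := h
    exact hT a p
  | zero =>
    convert diffOps.zero_mem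
    exact funext fun _ => map_zero T
  | add A B _ _ hA hB =>
    convert diffOps.add_mem hA hB
    exact funext fun _ => map_add T _ _
  | smul r A _ hA =>
    convert diffOps.smul_mem r hA
    exact funext fun _ => map_smul T _ _

theorem mul_comp_mem_diffOps (b : S2) {A : S2 → S2} (hA : A ∈ diffOps) :
    mul b ∘ A ∈ diffOps := by
  refine linearMap_comp_mem_diffOps (mulL b) (fun a p => ?_) hA
  convert monomialOp_mem_diffOps (mul b a) p
  exact funext fun _ => (mul_assoc _ _ _).symm

/-- The commutation rules `η̄ᵢ ∘ a = η̄ᵢ(a) + (−1)^{|a|} a ∘ η̄ᵢ` and `η̄₂η̄₁ = −η̄₁η̄₂` bring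
`η̄ᵢ ∘ a η̄₁^l η̄₂^m` back to normal form. -/
theorem eta1_comp_mem_diffOps {A : S2 → S2} (hA : A ∈ diffOps) : eta1 ∘ A ∈ diffOps := by
  refine linearMap_comp_mem_diffOps eta1L (fun a p => ?_) hA
  convert diffOps.add_mem (monomialOp_mem_diffOps (eta1 a) p)
    (monomialOp_mem_diffOps (evenPart a - oddPart a) (p.1 + 1, p.2))
  funext F
  simp only [Function.comp_apply, coe_eta1L, Pi.add_apply, monomialOp, eta1_mul,
    Function.iterate_succ_apply']

theorem eta2_comp_mem_diffOps {A : S2 → S2} (hA : A ∈ diffOps) : eta2 ∘ A ∈ diffOps := by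
  refine linearMap_comp_mem_diffOps eta2L (fun a p => ?_) hA
  convert diffOps.add_mem (monomialOp_mem_diffOps (eta2 a) p)
    (monomialOp_mem_diffOps (((-1 : ℝ) ^ p.1) • (evenPart a - oddPart a)) (p.1, p.2 + 1))
  funext F
  simp only [Function.comp_apply, coe_eta2L, Pi.add_apply, monomialOp, eta2_mul,
    eta2_eta1_iterate, mul_smul_right, mul_smul_left, Function.iterate_succ_apply']

theorem iterate_comp_mem_diffOps {f : S2 → S2} (hf : ∀ A ∈ diffOps, f ∘ A ∈ diffOps) (n : ℕ)
    {A : S2 → S2} (hA : A ∈ diffOps) : f^[n] ∘ A ∈ diffOps := by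
  induction n with
  | zero => exact hA
  | succ n ih => rw [Function.iterate_succ']; exact hf _ ih

theorem comp_mem_diffOps {A B : S2 → S2} (hA : A ∈ diffOps) (hB : B ∈ diffOps) :
    A ∘ B ∈ diffOps := by
  induction hA using Submodule.span_induction with
  | mem _ h =>
    obtain ⟨⟨a, l, m⟩, rfl⟩ := h
    exact mul_comp_mem_diffOps a <| iterate_comp_mem_diffOps (fun _ => eta1_comp_mem_diffOps) l <|
      iterate_comp_mem_diffOps (fun _ => eta2_comp_mem_diffOps) m hB
  | zero => exact diffOps.zero_mem
  | add _ _ _ _ hA hB => exact diffOps.add_mem hA hB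
  | smul r _ _ hA => exact diffOps.smul_mem r hA

theorem mul_one_left (F : S2) : mul one2 F = F := by
  apply ext4 <;> (simp only [mul_apply0, mul_apply1, mul_apply2, mul_apply3]; simp [one2])

theorem id_mem_diffOps : (id : S2 → S2) ∈ diffOps := by
  convert monomialOp_mem_diffOps one2 (0, 0)
  exact funext fun F => (mul_one_left F).symm

/-- As operators, `θ₁∂₁ = θ₁η̄₁`, `θ₂∂₂ = θ₂η̄₂` and `θ₁θ₂∂₂∂₁ = −θ₁θ₂η̄₁η̄₂`; the odd part is
`θ₁∂₁ + θ₂∂₂ − 2θ₁θ₂∂₂∂₁`. -/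
theorem oddPart_mem_diffOps : oddPart ∈ diffOps := by
  convert diffOps.add_mem (diffOps.add_mem (monomialOp_mem_diffOps θ1 (1, 0))
    (monomialOp_mem_diffOps θ2 (0, 1))) (diffOps.smul_mem 2 (monomialOp_mem_diffOps fθ12 (1, 1)))
  funext F
  apply ext4 <;> (simp [monomialOp]; simp [θ1, θ2, fθ12, two_smul]; try ring)

theorem evenPart_mem_diffOps : evenPart ∈ diffOps := by
  convert diffOps.sub_mem id_mem_diffOps oddPart_mem_diffOps
  funext F
  apply ext4 <;> simp

theorem Lact_mem_diffOps (lam : ℝ) (H : S2) : Lact lam H ∈ diffOps := by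
  have hdx : ∀ c, monomialOp (-c) (0, 2) = fun G => mul c (dx G) := fun c => by
    funext G
    apply ext4 <;> (simp [monomialOp, sderiv_neg]; try ring)
  have hL : Lact lam H = monomialOp (-H) (0, 2)
      - (1 / 2 : ℝ) • (monomialOp (eta1 (evenPart H)) (1, 0)
        + monomialOp (eta2 (evenPart H)) (0, 1))
      + (1 / 2 : ℝ) • (monomialOp (eta1 (oddPart H)) (1, 0)
        + monomialOp (eta2 (oddPart H)) (0, 1))
      + lam • monomialOp (dx H) (0, 0) := by
    rw [hdx]; rfl
  have hmem := monomialOp_mem_diffOps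
  rw [hL]
  exact diffOps.add_mem (diffOps.add_mem (diffOps.sub_mem (hmem _ _)
    (diffOps.smul_mem _ (diffOps.add_mem (hmem _ _) (hmem _ _))))
    (diffOps.smul_mem _ (diffOps.add_mem (hmem _ _) (hmem _ _))))
    (diffOps.smul_mem _ (hmem _ _))

theorem ext4_iff {a b : S2} : a = b ↔ a 0 = b 0 ∧ a 1 = b 1 ∧ a 2 = b 2 ∧ a 3 = b 3 :=
  ⟨by rintro rfl; simp, fun ⟨h0, h1, h2, h3⟩ => ext4 h0 h1 h2 h3⟩

def proj (i : Fin 2) : S2 →ₗ[ℝ] S2 where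
  toFun F := if i = 0 then (![F 0, F 1, 0, 0] : S2) else ![0, 0, F 2, F 3]
  map_add' F G := by fin_cases i <;> apply ext4 <;> simp only [add_apply] <;> simp
  map_smul' r F := by fin_cases i <;> apply ext4 <;> simp only [smul_apply] <;> simp

@[simp] theorem proj_zero_apply0 (F : S2) : proj 0 F 0 = F 0 := rfl
@[simp] theorem proj_zero_apply1 (F : S2) : proj 0 F 1 = F 1 := rfl
@[simp] theorem proj_zero_apply2 (F : S2) : proj 0 F 2 = 0 := rfl
@[simp] theorem proj_zero_apply3 (F : S2) : proj 0 F 3 = 0 := rfl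
@[simp] theorem proj_one_apply0 (F : S2) : proj 1 F 0 = 0 := rfl
@[simp] theorem proj_one_apply1 (F : S2) : proj 1 F 1 = 0 := rfl
@[simp] theorem proj_one_apply2 (F : S2) : proj 1 F 2 = F 2 := rfl
@[simp] theorem proj_one_apply3 (F : S2) : proj 1 F 3 = F 3 := rfl

theorem mem_Esub_iff {F : S2} : F ∈ Esub ↔ F 2 = 0 ∧ F 3 = 0 := by
  change d2 F = 0 ↔ _
  simp [ext4_iff]

theorem mem_θ2Esub_iff {F : S2} : F ∈ θ2Esub ↔ F 0 = 0 ∧ F 1 = 0 := by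
  refine ⟨?_, fun ⟨h0, h1⟩ => ⟨d2 F, mem_Esub_iff.mpr (by simp), ?_⟩⟩
  · rintro ⟨G, -, rfl⟩
    simp [mul, θ2]
  · apply ext4 <;> simp [mul, θ2, h0, h1]

theorem proj_eq_self_iff {i : Fin 2} {F : S2} :
    proj i F = F ↔ F ∈ (if i = 0 then Esub else θ2Esub) := by
  rw [ext4_iff]
  fin_cases i <;> simp [mem_Esub_iff, mem_θ2Esub_iff, eq_comm]

theorem proj_eq_zero_iff {i : Fin 2} {F : S2} :
    proj i F = 0 ↔ F ∈ (if i = 0 then θ2Esub else Esub) := by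
  rw [ext4_iff]
  fin_cases i <;> simp [mem_Esub_iff, mem_θ2Esub_iff]

theorem proj_proj (i j : Fin 2) (F : S2) : proj i (proj j F) = if i = j then proj i F else 0 := by
  fin_cases i <;> fin_cases j <;> apply ext4 <;> simp

theorem proj_zero_add_proj_one (F : S2) : proj 0 F + proj 1 F = F := by
  apply ext4 <;> simp

theorem proj_mem_diffOps (i : Fin 2) : ⇑(proj i) ∈ diffOps := by
  have h1 : ⇑(proj 1) = monomialOp θ2 (0, 1) := by
    funext F
    apply ext4 <;> (simp [monomialOp]; simp [θ2])
  have h0 : ⇑(proj 0) = id - ⇑(proj 1) := by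
    funext F
    apply ext4 <;> simp
  fin_cases i
  · exact h0 ▸ diffOps.sub_mem id_mem_diffOps (h1 ▸ monomialOp_mem_diffOps θ2 (0, 1))
  · exact h1 ▸ monomialOp_mem_diffOps θ2 (0, 1)

theorem proj_evenPart (i : Fin 2) (F : S2) : proj i (evenPart F) = evenPart (proj i F) := by
  fin_cases i <;> apply ext4 <;> simp

theorem proj_oddPart (i : Fin 2) (F : S2) : proj i (oddPart F) = oddPart (proj i F) := by
  fin_cases i <;> apply ext4 <;> simp

theorem proj_Lact (lam : ℝ) {H : S2} (hH : H ∈ Esub) (i : Fin 2) (F : S2) :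
    proj i (Lact lam H F) = Lact lam H (proj i F) := by
  obtain ⟨h2, h3⟩ := mem_Esub_iff.mp hH
  fin_cases i <;> apply ext4 <;> simp [Lact, X, h2, h3, sderiv_zero]

theorem osp12_le_Esub : osp12 ≤ Esub := by
  refine Submodule.span_le.mpr ?_
  simp only [Set.insert_subset_iff, Set.singleton_subset_iff, SetLike.mem_coe, mem_Esub_iff]
  and_intros <;> rfl

def block (i j : Fin 2) (A : S2 → S2) : S2 → S2 := fun F => proj j (A (proj i F))

theorem block_mem_diffOps (i j : Fin 2) {A : S2 → S2} (hA : A ∈ diffOps) :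
    block i j A ∈ diffOps :=
  comp_mem_diffOps (proj_mem_diffOps j) (comp_mem_diffOps hA (proj_mem_diffOps i))

theorem block_block (i j : Fin 2) (A : S2 → S2) : block i j (block i j A) = block i j A := by
  funext F
  simp only [block, proj_proj, ↓reduceIte]

theorem block_add (i j : Fin 2) (A B : S2 → S2) :
    block i j (A + B) = block i j A + block i j B :=
  funext fun _ => map_add (proj j) _ _

theorem inD_iff {i j : Fin 2} {A : S2 → S2} :
    InD i j A ↔ A ∈ diffOps ∧ block i j A = A := by
  rw [InD, isDiffOp_iff_mem_diffOps]
  refine and_congr_right fun hA => ⟨fun ⟨hmaps, hkills⟩ => funext fun F => ?_, fun h => ⟨?_, ?_⟩⟩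
  · have hcompl : F - proj i F ∈ (if i = 0 then θ2Esub else Esub) := by
      rw [← proj_eq_zero_iff, map_sub, proj_proj, if_pos rfl, sub_self]
    have hF : A F = A (proj i F) := by
      rw [← add_sub_cancel (proj i F) F, map_add_of_mem_diffOps hA, hkills _ hcompl, add_zero,
        add_sub_cancel]
    have hmem : proj i F ∈ (if i = 0 then Esub else θ2Esub) := by
      rw [← proj_eq_self_iff, proj_proj, if_pos rfl]
    rw [block, hF, proj_eq_self_iff.mpr (hmaps _ hmem)]
  · intro F _
    rw [← h, ← proj_eq_self_iff, block, proj_proj, if_pos rfl]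
  · intro F hF
    rw [← h, block, proj_eq_zero_iff.mpr hF, map_zero_of_mem_diffOps hA, map_zero]

theorem InD.block_eq {k l : Fin 2} {B : S2 → S2} (hB : InD k l B) (i j : Fin 2) :
    block i j B = if i = k ∧ j = l then B else 0 := by
  obtain ⟨hmem, hblock⟩ := inD_iff.mp hB
  have hF := congrFun hblock
  simp only [block] at hF
  funext F
  rw [block, ← hF (proj i F), proj_proj, proj_proj]
  by_cases hi : k = i
  · subst hi
    by_cases hj : j = l
    · subst hj
      simp [hF]
    · simp [hj]
  · simp [hi, Ne.symm hi, map_zero_of_mem_diffOps hmem]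

theorem sum_blocks {A : S2 → S2} (hA : A ∈ diffOps) :
    block 0 0 A + block 1 1 A + block 0 1 A + block 1 0 A = A := by
  funext F
  have hsplit : A F = A (proj 0 F) + A (proj 1 F) := by
    rw [← map_add_of_mem_diffOps hA, proj_zero_add_proj_one]
  calc (block 0 0 A + block 1 1 A + block 0 1 A + block 1 0 A) F
      = (proj 0 (A (proj 0 F)) + proj 1 (A (proj 0 F)))
        + (proj 0 (A (proj 1 F)) + proj 1 (A (proj 1 F))) := by
        simp only [Pi.add_apply, block]
        abel
    _ = A F := by rw [proj_zero_add_proj_one, proj_zero_add_proj_one, hsplit]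

theorem existsUnique_inD_decomposition {A : S2 → S2} (hA : A ∈ diffOps) :
    ∃! q : (S2 → S2) × (S2 → S2) × (S2 → S2) × (S2 → S2),
      InD 0 0 q.1 ∧ InD 1 1 q.2.1 ∧ InD 0 1 q.2.2.1 ∧ InD 1 0 q.2.2.2 ∧
        A = q.1 + q.2.1 + q.2.2.1 + q.2.2.2 := by
  have hblock : ∀ i j, InD i j (block i j A) := fun i j =>
    inD_iff.mpr ⟨block_mem_diffOps i j hA, block_block i j A⟩
  refine ⟨(block 0 0 A, block 1 1 A, block 0 1 A, block 1 0 A),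
    ⟨hblock 0 0, hblock 1 1, hblock 0 1, hblock 1 0, (sum_blocks hA).symm⟩, ?_⟩
  rintro ⟨B₀₀, B₁₁, B₀₁, B₁₀⟩ ⟨h₀₀, h₁₁, h₀₁, h₁₀, rfl⟩
  simp [block_add, h₀₀.block_eq, h₁₁.block_eq, h₀₁.block_eq, h₁₀.block_eq]

theorem opEven_mem_diffOps {A : S2 → S2} (hA : A ∈ diffOps) : opEven A ∈ diffOps :=
  diffOps.add_mem
    (comp_mem_diffOps evenPart_mem_diffOps (comp_mem_diffOps hA evenPart_mem_diffOps))
    (comp_mem_diffOps oddPart_mem_diffOps (comp_mem_diffOps hA oddPart_mem_diffOps))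

theorem opOdd_mem_diffOps {A : S2 → S2} (hA : A ∈ diffOps) : opOdd A ∈ diffOps :=
  diffOps.add_mem
    (comp_mem_diffOps oddPart_mem_diffOps (comp_mem_diffOps hA evenPart_mem_diffOps))
    (comp_mem_diffOps evenPart_mem_diffOps (comp_mem_diffOps hA oddPart_mem_diffOps))

theorem opActG_mem_diffOps (lam mu : ℝ) (pH : Bool) (H : S2) {A : S2 → S2}
    (hA : A ∈ diffOps) : opActG lam mu pH H A ∈ diffOps :=
  diffOps.sub_mem (comp_mem_diffOps (Lact_mem_diffOps mu H) hA)
    (diffOps.add_mem (comp_mem_diffOps (opEven_mem_diffOps hA) (Lact_mem_diffOps lam H))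
      (diffOps.smul_mem _ (comp_mem_diffOps (opOdd_mem_diffOps hA) (Lact_mem_diffOps lam H))))

theorem block_opActG (lam mu : ℝ) (pH : Bool) {H : S2} (hH : H ∈ Esub) (i j : Fin 2)
    (A : S2 → S2) : block i j (opActG lam mu pH H A) = opActG lam mu pH H (block i j A) := by
  funext F
  simp only [block, opActG, opEven, opOdd, map_sub, map_add, map_smul, proj_Lact lam hH,
    proj_Lact mu hH, proj_evenPart, proj_oddPart]

theorem InD.opActG {lam mu : ℝ} {pH : Bool} {H : S2} (hH : H ∈ Esub) {i j : Fin 2}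
    {A : S2 → S2} (hA : InD i j A) : InD i j (opActG lam mu pH H A) := by
  obtain ⟨hA, hblock⟩ := inD_iff.mp hA
  exact inD_iff.mpr ⟨opActG_mem_diffOps lam mu pH H hA, by rw [block_opActG lam mu pH hH, hblock]⟩

end S2

open S2 in
/-- `D²_{λ,μ} = D₁₁ ⊕ D₂₂ ⊕ D₁₂ ⊕ D₂₁`: every differential operator decomposes uniquely
into four parts, and each subspace `D_{ij}` is invariant under the `osp(1|2)`-action
`X_H·A = L^μ_{X_H}∘A − (−1)^{|H||A|} A∘L^λ_{X_H}`.  (This realizes the decomposition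
`D²_{λ,μ} ≅ D¹_{λ,μ} ⊕ D¹_{λ+1/2,μ+1/2} ⊕ Π(D¹_{λ,μ+1/2} ⊕ D¹_{λ+1/2,μ})`.) -/
theorem diffOp_decomposition (lam mu : ℝ) :
    (∀ A : S2 → S2, IsDiffOp A →
      ∃! q : (S2 → S2) × (S2 → S2) × (S2 → S2) × (S2 → S2),
        InD 0 0 q.1 ∧ InD 1 1 q.2.1 ∧ InD 0 1 q.2.2.1 ∧ InD 1 0 q.2.2.2 ∧
          A = q.1 + q.2.1 + q.2.2.1 + q.2.2.2) ∧
    (∀ (i j : Fin 2) (A : S2 → S2), InD i j A →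
      ∀ H ∈ osp12, ∀ pH : Bool, HasParity H pH →
        InD i j (opActG lam mu pH H A)) :=
  ⟨fun _ hA => existsUnique_inD_decomposition (isDiffOp_iff_mem_diffOps.mp hA),
    fun _ _ _ hA _ hH _ _ => hA.opActG (osp12_le_Esub hH)⟩
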